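/- arXiv:2205.00459 — 2 statements merged into one kernel-verified Lean document; each statement's English description precedes it below -/
import Mathlib

section
/- If liminf_{N→∞} Ī[N] > V_th, then the IF neuron fails to fire at only finitely many time steps (s[n] = 0 for only finitely many n), and consequently the scaled firing rates converge to the threshold: a[N] → V_th as N → ∞. -/
/-!
Summing the reset dynamics telescopes to `∑_{n ≤ N} I n = V N - V 0 + Vth · ∑_{n ≤ N} s n`.
At a silent step `V N < Vth`, and `∑_{n ≤ N} s n ≤ N`, so the total input up to a silent step
is less than `Vth · (N + 1) - V 0`. Since the liminf hypothesis makes the total input eventually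
at least `a · N` with `a > Vth`, silent steps cannot occur for large `N`. Once the neuron fires at
every step, the firing rate converges to `Vth` by Cesàro summation.
-/

open Filter Finset Topology

theorem Finset.sum_Icc_one_eq_sum_range {M : Type*} [AddCommMonoid M] (f : ℕ → M) (N : ℕ) :
    ∑ n ∈ Icc 1 N, f n = ∑ i ∈ range N, f (i + 1) := by
  rw [range_eq_Ico, sum_Ico_add' f 0 N 1]
  rfl

theorem Filter.Tendsto.cesaro_Icc_one {u : ℕ → ℝ} {l : ℝ} (h : Tendsto u atTop (𝓝 l)) :
    Tendsto (fun N : ℕ => (N : ℝ)⁻¹ * ∑ n ∈ Icc 1 N, u n) atTop (𝓝 l) := by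
  simpa only [sum_Icc_one_eq_sum_range] using ((tendsto_add_atTop_iff_nat 1).2 h).cesaro

theorem Real.isBoundedUnder_ge_of_nonneg_lt_liminf {ι : Type*} {f : Filter ι} {u : ι → ℝ}
    {b : ℝ} (hb : 0 ≤ b) (h : b < liminf u f) : f.IsBoundedUnder (· ≥ ·) u := by
  by_contra hu
  rw [Real.liminf_of_not_isBoundedUnder hu] at h
  linarith

namespace IFNeuron

variable {Vth : ℝ} {I V s : ℕ → ℝ}

theorem sum_input_eq (hV : ∀ n : ℕ, V (n + 1) = (V n + I (n + 1)) - Vth * s (n + 1)) (N : ℕ) :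
    ∑ n ∈ Icc 1 N, I n = V N - V 0 + Vth * ∑ n ∈ Icc 1 N, s n := by
  have hI : ∀ i, I (i + 1) = (V (i + 1) - V i) + Vth * s (i + 1) := fun i => by
    rw [hV]; ring
  simp_rw [sum_Icc_one_eq_sum_range, hI, sum_add_distrib, sum_range_sub, mul_sum]

theorem spike_succ_le_one (hs : ∀ n : ℕ, s (n + 1) = if Vth ≤ V n + I (n + 1) then 1 else 0)
    (n : ℕ) : s (n + 1) ≤ 1 := by
  rw [hs]
  split_ifs <;> norm_num

theorem sum_spike_le (hs : ∀ n : ℕ, s (n + 1) = if Vth ≤ V n + I (n + 1) then 1 else 0)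
    (N : ℕ) : ∑ n ∈ Icc 1 N, s n ≤ N := by
  rw [sum_Icc_one_eq_sum_range]
  simpa using sum_le_card_nsmul (range N) _ 1 fun i _ => spike_succ_le_one hs i

theorem potential_succ_lt_of_spike_ne_one
    (hs : ∀ n : ℕ, s (n + 1) = if Vth ≤ V n + I (n + 1) then 1 else 0)
    (hV : ∀ n : ℕ, V (n + 1) = (V n + I (n + 1)) - Vth * s (n + 1))
    {n : ℕ} (h : s (n + 1) ≠ 1) : V (n + 1) < Vth := by
  have hsub : ¬ Vth ≤ V n + I (n + 1) := fun hle => h (by rw [hs, if_pos hle])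
  rw [hV, hs, if_neg hsub]
  linarith

theorem eventually_spike_eq_one (hVth : 0 ≤ Vth)
    (hs : ∀ n : ℕ, s (n + 1) = if Vth ≤ V n + I (n + 1) then 1 else 0)
    (hV : ∀ n : ℕ, V (n + 1) = (V n + I (n + 1)) - Vth * s (n + 1))
    {a : ℝ} (ha : Vth < a)
    (hI : ∀ᶠ N : ℕ in atTop, a < (1 / (N : ℝ)) * ∑ n ∈ Icc 1 N, I n) :
    ∀ᶠ n in atTop, s n = 1 := by
  have hlarge : ∀ᶠ N : ℕ in atTop, Vth - V 0 ≤ (a - Vth) * N :=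
    (tendsto_natCast_atTop_atTop.const_mul_atTop (sub_pos.2 ha)).eventually_ge_atTop _
  filter_upwards [hI, hlarge, eventually_ge_atTop 1] with N hIN hN hN1
  obtain ⟨m, rfl⟩ := Nat.exists_eq_add_of_le' hN1
  by_contra hsilent
  have hpos : (0 : ℝ) < ↑(m + 1) := by positivity
  have hmean : a * ↑(m + 1) < ∑ n ∈ Icc 1 (m + 1), I n := by
    rwa [one_div_mul_eq_div, lt_div_iff₀ hpos] at hIN
  have hspikes := mul_le_mul_of_nonneg_left (sum_spike_le hs (m + 1)) hVth
  have hVm := potential_succ_lt_of_spike_ne_one hs hV hsilent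
  rw [sum_input_eq hV] at hmean
  linarith

end IFNeuron

theorem if_finitely_many_silences_of_liminf_gt_general (Vth : ℝ) (hVth : 0 < Vth)
    (I V s : ℕ → ℝ)
    (hs : ∀ n : ℕ, s (n + 1) = if Vth ≤ V n + I (n + 1) then 1 else 0)
    (hV : ∀ n : ℕ, V (n + 1) = (V n + I (n + 1)) - Vth * s (n + 1))
    (hliminf : Vth < Filter.liminf
        (fun N : ℕ => (1 / (N : ℝ)) * ∑ n ∈ Finset.Icc 1 N, I n) atTop) :
    {n : ℕ | 1 ≤ n ∧ s n = 0}.Finite ∧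
    Tendsto (fun N : ℕ => (Vth / N) * ∑ n ∈ Finset.Icc 1 N, s n)
      atTop (nhds Vth) := by
  obtain ⟨a, hVa, ha⟩ := exists_between hliminf
  have hfire : ∀ᶠ n in atTop, s n = 1 :=
    IFNeuron.eventually_spike_eq_one hVth.le hs hV hVa <| eventually_lt_of_lt_liminf ha <|
      Real.isBoundedUnder_ge_of_nonneg_lt_liminf hVth.le hliminf
  refine ⟨?_, ?_⟩
  · rw [← Nat.cofinite_eq_atTop, eventually_cofinite] at hfire
    exact hfire.subset fun n hn => by simp [hn.2]
  · have hrate := (tendsto_const_nhds.congr' (hfire.mono fun _ h => h.symm)).cesaro_Icc_one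
    simpa only [mul_one, div_eq_mul_inv, mul_assoc] using hrate.const_mul Vth

/-- For the discrete-time IF neuron: if
`liminf_{N→∞} Ī N > Vth`, then the neuron fails to fire at only finitely many time
steps (`s n = 0` for only finitely many `n ≥ 1`), and consequently the scaled firing
rates converge to the threshold: `a N → Vth`. -/
theorem if_finitely_many_silences_of_liminf_gt (Vth : ℝ) (hVth : 0 < Vth)
    (I V s : ℕ → ℝ)
    (hV0 : V 0 = 0)
    (hs : ∀ n : ℕ, s (n + 1) = if Vth ≤ V n + I (n + 1) then 1 else 0)
    (hV : ∀ n : ℕ, V (n + 1) = (V n + I (n + 1)) - Vth * s (n + 1))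
    (hliminf : Vth < Filter.liminf
        (fun N : ℕ => (1 / (N : ℝ)) * ∑ n ∈ Finset.Icc 1 N, I n) atTop) :
    {n : ℕ | 1 ≤ n ∧ s n = 0}.Finite ∧
    Tendsto (fun N : ℕ => (Vth / N) * ∑ n ∈ Finset.Icc 1 N, s n)
      atTop (nhds Vth) :=
  if_finitely_many_silences_of_liminf_gt_general Vth hVth I V s hs hV hliminf
end

section
/- With the modified firing rule at α = 1/2, if the input current is constant, I[n] = I* for all n ≥ 1, then for every N ≥ 1 the spike count equals ∑_{n=1}^N s[n] = clamp(⌊N·I*/V_th + 1/2⌋, 0, N), where clamp(x,a,b) := max(a, min(x,b)) and ⌊·⌋ is the floor function; equivalently, a[N] = (V_th/N)·clamp(⌊N·I*/V_th + 1/2⌋, 0, N). -/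
/-!
Write `x = Istar / Vth` and `S n` for the number of spikes up to step `n`. Since
`V n = n * Istar - Vth * S n`, the neuron fires at step `n + 1` exactly when
`S n < ⌊(n + 1) * x + 1 / 2⌋`. The clamped rounding `clamp(⌊n * x + 1 / 2⌋, 0, n)` obeys the
same recursion: it is constantly `0` when `x ≤ 0`, equals `n` when `1 ≤ x`, and for
`0 < x < 1` the values `⌊n * x + 1 / 2⌋` start at `0` and grow by `0` or `1` per step.
-/

open Finset

noncomputable def clampedCount (x : ℝ) (n : ℕ) : ℤ := max 0 (min ⌊n * x + 1 / 2⌋ n)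

section RoundHalfUp

variable {x : ℝ}

lemma floor_mul_add_half_nonpos (hx : x ≤ 0) (n : ℕ) : ⌊n * x + 1 / 2⌋ ≤ 0 := by
  have : (n : ℝ) * x ≤ 0 := mul_nonpos_of_nonneg_of_nonpos n.cast_nonneg hx
  rw [← Int.lt_add_one_iff, Int.floor_lt]
  push_cast
  linarith

lemma floor_mul_add_half_nonneg (hx : 0 ≤ x) (n : ℕ) : 0 ≤ ⌊n * x + 1 / 2⌋ := by
  have : 0 ≤ (n : ℝ) * x := mul_nonneg n.cast_nonneg hx
  exact Int.floor_nonneg.mpr (by linarith)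

lemma le_floor_mul_add_half (hx : 1 ≤ x) (n : ℕ) : (n : ℤ) ≤ ⌊n * x + 1 / 2⌋ := by
  have : (n : ℝ) ≤ n * x := le_mul_of_one_le_right n.cast_nonneg hx
  rw [Int.le_floor]
  push_cast
  linarith

lemma floor_mul_add_half_le_succ (hx : 0 ≤ x) (n : ℕ) :
    ⌊n * x + 1 / 2⌋ ≤ ⌊(n + 1 : ℕ) * x + 1 / 2⌋ := by
  gcongr
  exact n.le_succ

lemma floor_succ_mul_add_half_le (hx : x ≤ 1) (n : ℕ) :
    ⌊(n + 1 : ℕ) * x + 1 / 2⌋ ≤ ⌊n * x + 1 / 2⌋ + 1 := by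
  calc ⌊(n + 1 : ℕ) * x + 1 / 2⌋ ≤ ⌊(n * x + 1 / 2) + 1⌋ :=
        Int.floor_le_floor (by push_cast; linarith [add_one_mul (n : ℝ) x])
    _ = ⌊n * x + 1 / 2⌋ + 1 := Int.floor_add_one _

end RoundHalfUp

lemma clampedCount_succ (x : ℝ) (n : ℕ) :
    clampedCount x (n + 1) = if clampedCount x n < ⌊(n + 1 : ℕ) * x + 1 / 2⌋
      then clampedCount x n + 1 else clampedCount x n := by
  unfold clampedCount
  rcases le_or_gt x 0 with hx | hx
  · have := floor_mul_add_half_nonpos hx n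
    have := floor_mul_add_half_nonpos hx (n + 1)
    split_ifs <;> omega
  rcases le_or_gt 1 x with hx' | hx'
  · have := le_floor_mul_add_half hx' n
    have := le_floor_mul_add_half hx' (n + 1)
    split_ifs <;> omega
  · have := floor_mul_add_half_nonneg hx.le n
    have := floor_mul_add_half_le_succ hx.le n
    have := floor_succ_mul_add_half_le hx'.le n
    split_ifs <;> omega

lemma half_mul_le_iff_add_one_le_floor {Vth : ℝ} (hVth : 0 < Vth) (I : ℝ) (n : ℕ) (S : ℤ) :
    1 / 2 * Vth ≤ (n * I - Vth * S) + I ↔ S + 1 ≤ ⌊(n + 1 : ℕ) * (I / Vth) + 1 / 2⌋ := by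
  rw [Int.le_floor, ← sub_le_iff_le_add (c := (1 / 2 : ℝ)), ← mul_div_assoc, le_div_iff₀ hVth]
  push_cast
  constructor <;> intro h <;> linarith

section IntegrateAndFire

variable {Vth I : ℝ} {V s : ℕ → ℝ}

lemma potential_eq_sub_spikeCount (hV0 : V 0 = 0)
    (hV : ∀ n : ℕ, V (n + 1) = (V n + I) - Vth * s (n + 1)) (n : ℕ) :
    V n = n * I - Vth * ∑ k ∈ Icc 1 n, s k := by
  induction n with
  | zero => simp [hV0]
  | succ n ih =>
    rw [hV, ih, sum_Icc_succ_top (by omega)]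
    push_cast
    ring

lemma spikeCount_eq_clampedCount (hVth : 0 < Vth) (hV0 : V 0 = 0)
    (hs : ∀ n : ℕ, s (n + 1) = if (1 / 2 : ℝ) * Vth ≤ V n + I then 1 else 0)
    (hV : ∀ n : ℕ, V (n + 1) = (V n + I) - Vth * s (n + 1)) (n : ℕ) :
    ∑ k ∈ Icc 1 n, s k = clampedCount (I / Vth) n := by
  induction n with
  | zero => simp [clampedCount]
  | succ n ih =>
    rw [sum_Icc_succ_top (by omega), hs, potential_eq_sub_spikeCount hV0 hV, ih,
      clampedCount_succ]
    simp only [half_mul_le_iff_add_one_le_floor hVth, Int.add_one_le_iff]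
    split_ifs <;> push_cast <;> ring

end IntegrateAndFire

/-- For the discrete-time IF neuron with threshold `Vth > 0`,
constant input current `Istar`, and the modified firing rule at `α = 1/2` (fire when
`U n ≥ α·Vth`, reset by subtracting `Vth`), for every `N ≥ 1` the spike count equals
`∑_{n=1}^N s n = clamp(⌊N·Istar/Vth + 1/2⌋, 0, N)` where
`clamp x a b = max a (min x b)`; equivalently,
`a N = (Vth/N) · clamp(⌊N·Istar/Vth + 1/2⌋, 0, N)`. -/
theorem if_modified_constant_input_spike_count (Vth Istar : ℝ) (hVth : 0 < Vth)
    (V s : ℕ → ℝ)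
    (hV0 : V 0 = 0)
    (hs : ∀ n : ℕ, s (n + 1) = if (1 / 2 : ℝ) * Vth ≤ V n + Istar then 1 else 0)
    (hV : ∀ n : ℕ, V (n + 1) = (V n + Istar) - Vth * s (n + 1)) :
    ∀ N : ℕ, 1 ≤ N →
      (∑ n ∈ Finset.Icc 1 N, s n)
          = ((max 0 (min ⌊(N : ℝ) * Istar / Vth + 1 / 2⌋ (N : ℤ)) : ℤ) : ℝ) ∧
      (Vth / N) * ∑ n ∈ Finset.Icc 1 N, s n
          = (Vth / N) * ((max 0 (min ⌊(N : ℝ) * Istar / Vth + 1 / 2⌋ (N : ℤ)) : ℤ) : ℝ) := by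
  intro N _
  have hcount : ∑ n ∈ Icc 1 N, s n = clampedCount (Istar / Vth) N :=
    spikeCount_eq_clampedCount hVth hV0 hs hV N
  rw [clampedCount, ← mul_div_assoc] at hcount
  exact ⟨hcount, by rw [hcount]⟩
end
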